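/- Let λ = Σ m_j ω_j be dominant for sp_{2n}, let i be minimal with m_i ≠ 0, and let s ∈ S(λ). Let M_i^s be the set of minimal elements (with respect to the order (2.8)) of {β : (ω_i, β) ≠ 0 and s_β ≠ 0}, and let m_i^s be its indicator vector. Then m_i^s ∈ S(ω_i). -/

import Mathlib

open scoped BigOperators TensorProduct

namespace SpPBW

/-- Coded positive roots of `C_n`: a pair `(i,c)` with `1 ≤ i ≤ c ≤ 2n - i`.
For `c ≤ n` this codes the root `α_{i,c} = α_i + ⋯ + α_c`; for `c > n` it codes the
root `α_{i, (2n-c)-bar} = α_i + ⋯ + α_n + α_{n-1} + ⋯ + α_{2n-c}`. -/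
def ValidPair (n : ℕ) (a : ℕ × ℕ) : Prop :=
  1 ≤ a.1 ∧ a.1 ≤ a.2 ∧ a.2 ≤ 2 * n - a.1

instance (n : ℕ) : DecidablePred (ValidPair n) := fun a =>
  decidable_of_iff (1 ≤ a.1 ∧ a.1 ≤ a.2 ∧ a.2 ≤ 2 * n - a.1) Iff.rfl

def validFinset (n : ℕ) : Finset (ℕ × ℕ) :=
  (Finset.Icc 1 n ×ˢ Finset.Icc 1 (2 * n)).filter fun a => ValidPair n a

/-- The order (2.8) on positive roots: `rootLt a b` means `f_a < f_b`,
i.e. `f_b` is larger (rows from top to bottom, within a row from left to right). -/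
def rootLt (a b : ℕ × ℕ) : Prop := a.1 < b.1 ∨ (a.1 = b.1 ∧ a.2 < b.2)

def DyckStep (a b : ℕ × ℕ) : Prop := b = (a.1, a.2 + 1) ∨ b = (a.1 + 1, a.2)

/-- A symplectic Dyck path (Definition 1.2). -/
def IsDyck (n : ℕ) (p : List (ℕ × ℕ)) : Prop :=
  p ≠ [] ∧ (∀ a ∈ p, ValidPair n a) ∧ (∃ i, p.head? = some (i, i)) ∧
  p.Chain' DyckStep ∧ (∃ j, p.getLast? = some (j, j) ∨ p.getLast? = some (j, 2 * n - j))

/-- The bound `m_i + ⋯ + m_j` (resp. `m_i + ⋯ + m_n`) for a Dyck path starting at `α_i`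
and ending at `α_j` (resp. at `α_{j,j-bar}`). -/
def pathBound (n : ℕ) (m : ℕ → ℕ) (p : List (ℕ × ℕ)) : ℕ :=
  match p.head?, p.getLast? with
  | some a, some b =>
      if b.1 = b.2 then ∑ l ∈ Finset.Icc a.1 b.2, m l else ∑ l ∈ Finset.Icc a.1 n, m l
  | _, _ => 0

/-- `InS n m s` says that the multi-exponent `s` is a lattice point of the
polytope `P(λ)` for `λ = Σ m_i ω_i`, i.e. `s ∈ S(λ)`. -/
def InS (n : ℕ) (m : ℕ → ℕ) (s : ℕ × ℕ → ℕ) : Prop :=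
  (∀ a, ¬ ValidPair n a → s a = 0) ∧
  ∀ p : List (ℕ × ℕ), IsDyck n p → (p.map s).sum ≤ pathBound n m p

/-- The coefficient vector of the fundamental weight `ω_i`. -/
def fundWt (i : ℕ) : ℕ → ℕ := fun l => if l = i then 1 else 0

/-- total degree of a multi-exponent -/
def deg (n : ℕ) (s : ℕ × ℕ → ℕ) : ℕ := ∑ a ∈ validFinset n, s a

/-- `s_{i,•}`, the sum of the exponents in the `i`-th row -/
def rowDeg (n : ℕ) (s : ℕ × ℕ → ℕ) (i : ℕ) : ℕ :=
  ∑ a ∈ (validFinset n).filter (fun a => a.1 = i), s a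

/-- `d(s) < d(t)` lexicographically, reading rows from the bottom (`i = n`) up. -/
def dLt (n : ℕ) (s t : ℕ × ℕ → ℕ) : Prop :=
  ∃ i, 1 ≤ i ∧ i ≤ n ∧ rowDeg n s i < rowDeg n t i ∧
    ∀ j, i < j → j ≤ n → rowDeg n s j = rowDeg n t j

def dEq (n : ℕ) (s t : ℕ × ℕ → ℕ) : Prop := ∀ i, rowDeg n s i = rowDeg n t i

/-- `f^s > f^t` in the lexicographic order induced by the variable order (2.8). -/
def lexGt (n : ℕ) (s t : ℕ × ℕ → ℕ) : Prop :=
  ∃ a, ValidPair n a ∧ t a < s a ∧ ∀ b, ValidPair n b → rootLt a b → s b = t b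

/-- `mOrd n s t` is the relation `f^s ◁ f^t` of Definition 2.7 (`f^s` "greater"). -/
def mOrd (n : ℕ) (s t : ℕ × ℕ → ℕ) : Prop :=
  deg n t < deg n s ∨ (deg n s = deg n t ∧ (dLt n s t ∨ (dEq n s t ∧ lexGt n s t)))

/-- multiplicity of the simple root `α_l` in the coded root `a` -/
def coeffRoot (n : ℕ) (a : ℕ × ℕ) (l : ℕ) : ℕ :=
  (if a.1 ≤ l ∧ l ≤ a.2 ∧ l ≤ n then 1 else 0) +
  (if n < a.2 ∧ 2 * n - a.2 ≤ l ∧ l ≤ n - 1 then 1 else 0)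

/-- the Cartan matrix of type `C_n` (indices `1,…,n`, `α_n` long):
`cartanC n i j = ⟨α_i, α_j^∨⟩` -/
def cartanC (n i j : ℕ) : ℤ :=
  if i = j then 2 else if i = n ∧ j + 1 = n then -2
  else if i + 1 = j ∨ j + 1 = i then -1 else 0

/-- `⟨α_a, α_i^∨⟩` for a coded positive root `a` -/
def rootPairing (n : ℕ) (a : ℕ × ℕ) (i : ℕ) : ℤ :=
  ∑ l ∈ Finset.Icc 1 n, (coeffRoot n a l : ℤ) * cartanC n l i

/-- `R_i^s`: coded roots `β` in the support of `s` with `(ω_i, β) ≠ 0`. -/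
def Ris (n i : ℕ) (s : ℕ × ℕ → ℕ) : Set (ℕ × ℕ) :=
  {a | ValidPair n a ∧ s a ≠ 0 ∧ a.1 ≤ i ∧ i ≤ a.2}

/-- the set of minimal elements of `R_i^s` with respect to the order (2.8) -/
def Mis (n i : ℕ) (s : ℕ × ℕ → ℕ) : Set (ℕ × ℕ) :=
  {a | a ∈ Ris n i s ∧ ∀ b ∈ Ris n i s, ¬ rootLt b a}

-- the indicator multi-exponent `m_i^s` of `M_i^s`
open Classical in
noncomputable def mInd (n i : ℕ) (s : ℕ × ℕ → ℕ) : ℕ × ℕ → ℕ :=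
  fun a => if a ∈ Mis n i s then 1 else 0


section Lie

variable {L V : Type*} [LieRing L] [LieAlgebra ℂ L]
variable [AddCommGroup V] [Module ℂ V] [LieRingModule L V] [LieModule ℂ L V]

/-- `applyList [x₁,…,x_l] w = x₁ ⋅ (x₂ ⋅ ( ⋯ (x_l ⋅ w)))` -/
def applyList (xs : List L) (w : V) : V := xs.foldr (fun x u => ⁅x, u⁆) w

/-- the Chevalley–Serre relations for the Cartan matrix of type `C_n`, for
generators `h i, e i, f i`, `1 ≤ i ≤ n` -/
def SerreRels (n : ℕ) (h e f : ℕ → L) : Prop :=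
  ∀ i ∈ Finset.Icc 1 n, ∀ j ∈ Finset.Icc 1 n,
    ⁅h i, h j⁆ = 0 ∧
    ⁅e i, f j⁆ = (if i = j then h i else 0) ∧
    ⁅h i, e j⁆ = (cartanC n j i : ℂ) • e j ∧
    ⁅h i, f j⁆ = (-(cartanC n j i) : ℂ) • f j ∧
    (i ≠ j → ((LieAlgebra.ad ℂ L (e i)) ^ (1 - cartanC n j i).toNat) (e j) = 0 ∧
      ((LieAlgebra.ad ℂ L (f i)) ^ (1 - cartanC n j i).toNat) (f j) = 0)

/-- `L` is generated as a Lie algebra by the Chevalley generators; together with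
`SerreRels` this pins `L` down as a quotient of `sp_{2n}`. -/
def Generates (n : ℕ) (h e f : ℕ → L) : Prop :=
  LieSubalgebra.lieSpan ℂ L {x | ∃ i, 1 ≤ i ∧ i ≤ n ∧ (x = h i ∨ x = e i ∨ x = f i)} = ⊤

/-- `F a` is a nonzero vector of `h`-weight `-α_a`, i.e. a root vector `f_{α_a} ∈ n⁻`. -/
def RootVectors (n : ℕ) (h : ℕ → L) (F : ℕ × ℕ → L) : Prop :=
  ∀ a, ValidPair n a → F a ≠ 0 ∧
    ∀ i ∈ Finset.Icc 1 n, ⁅h i, F a⁆ = (-(rootPairing n a i) : ℂ) • F a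

/-- `v` is a highest weight vector of weight `λ = Σ m_i ω_i`. -/
def IsHWVector (n : ℕ) (h e : ℕ → L) (m : ℕ → ℕ) (v : V) : Prop :=
  v ≠ 0 ∧ (∀ i ∈ Finset.Icc 1 n, ⁅e i, v⁆ = 0) ∧
    ∀ i ∈ Finset.Icc 1 n, ⁅h i, v⁆ = (m i : ℂ) • v

/-- the PBW filtration `V(λ)_d = U(n⁻)_d v_λ` (with `n⁻` spanned by the `F a`) -/
def filt (n : ℕ) (F : ℕ × ℕ → L) (v : V) (d : ℕ) : Submodule ℂ V :=
  Submodule.span ℂ {w | ∃ xs : List (ℕ × ℕ), xs.length ≤ d ∧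
    (∀ a ∈ xs, ValidPair n a) ∧ w = applyList (xs.map F) v}

/-- the step below degree `d` of the PBW filtration (so `⊥` for `d = 0`) -/
def lowFilt (n : ℕ) (F : ℕ × ℕ → L) (v : V) (d : ℕ) : Submodule ℂ V :=
  if d = 0 then ⊥ else filt n F v (d - 1)

/-- the PBW filtration `U(n⁻)_d v` for a subalgebra `n⁻` -/
def filtSub (nminus : LieSubalgebra ℂ L) (v : V) (d : ℕ) : Submodule ℂ V :=
  Submodule.span ℂ {w | ∃ xs : List L, xs.length ≤ d ∧ (∀ x ∈ xs, x ∈ nminus) ∧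
    w = applyList xs v}

/-- a fixed enumeration of the coded positive roots -/
def pairList (n : ℕ) : List (ℕ × ℕ) :=
  ((List.range (n + 1)).flatMap fun i => (List.range (2 * n + 1)).map fun c => (i, c)).filter
    fun a => decide (ValidPair n a)

/-- a canonical list realizing a multi-exponent `s` -/
def canonList (n : ℕ) (s : ℕ × ℕ → ℕ) : List (ℕ × ℕ) :=
  (pairList n).flatMap fun a => List.replicate (s a) a

/-- the vector `f^s v` (computed in some fixed order of the factors) -/
def actMon (n : ℕ) (F : ℕ × ℕ → L) (v : V) (s : ℕ × ℕ → ℕ) : V :=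
  applyList ((canonList n s).map F) v

/-- the index type of the variables of `S(n⁻) = ℂ[f_α : α > 0]` -/
abbrev RootIdx (n : ℕ) := {a : ℕ × ℕ // ValidPair n a}

/-- extend a multi-exponent on the valid pairs by zero -/
def extendExp (n : ℕ) (t : RootIdx n →₀ ℕ) : ℕ × ℕ → ℕ :=
  fun a => if h : ValidPair n a then t ⟨a, h⟩ else 0

/-- the action of a polynomial `p ∈ S(n⁻)` on `v` (monomial by monomial, each
monomial acting by the corresponding product of root vectors) -/
noncomputable def actPoly (n : ℕ) (F : ℕ × ℕ → L) (v : V) (p : MvPolynomial (RootIdx n) ℂ) : V :=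
  ∑ t ∈ p.support, MvPolynomial.coeff t p • actMon n F v (extendExp n t)

/-- `rootSub n a b = some c` when `α_a - α_b` is the positive root `α_c` -/
def rootSub (n : ℕ) (a b : ℕ × ℕ) : Option (ℕ × ℕ) :=
  (pairList n).find? fun c =>
    (List.range (n + 1)).all fun l => coeffRoot n c l + coeffRoot n b l == coeffRoot n a l

/-- the operator `∂_{α_b}` on `S(n⁻)`: the derivation with `∂_{α_b} f_{α_a} = f_{α_a - α_b}`
if `α_a - α_b` is a positive root and `0` otherwise -/
noncomputable def pd (n : ℕ) (b : ℕ × ℕ) :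
    Derivation ℂ (MvPolynomial (RootIdx n) ℂ) (MvPolynomial (RootIdx n) ℂ) :=
  MvPolynomial.mkDerivation ℂ fun a =>
    match rootSub n a.1 b with
    | some c => if h : ValidPair n c then MvPolynomial.X ⟨c, h⟩ else 0
    | none => 0

/-- the generators `f_{α_{i,j}}^{m_i+⋯+m_j+1}` (`1 ≤ i ≤ j ≤ n-1`) and
`f_{α_{i,ī}}^{m_i+⋯+m_n+1}` (`1 ≤ i ≤ n`) of the space `R` -/
def genSet (n : ℕ) (m : ℕ → ℕ) : Set (MvPolynomial (RootIdx n) ℂ) :=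
  {p | (∃ (a : RootIdx n) (i j : ℕ), 1 ≤ i ∧ i ≤ j ∧ j ≤ n - 1 ∧ a.val = (i, j) ∧
          p = MvPolynomial.X a ^ ((∑ l ∈ Finset.Icc i j, m l) + 1)) ∨
       (∃ (a : RootIdx n) (i : ℕ), 1 ≤ i ∧ i ≤ n ∧ a.val = (i, 2 * n - i) ∧
          p = MvPolynomial.X a ^ ((∑ l ∈ Finset.Icc i n, m l) + 1))}

/-- the set `U(n⁺) ∘ R`: all results of applying words in the operators `∂_α` to
elements of `R` -/
def opGenSet (n : ℕ) (m : ℕ → ℕ) : Set (MvPolynomial (RootIdx n) ℂ) :=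
  {p | ∃ (ds : List (ℕ × ℕ)) (r : MvPolynomial (RootIdx n) ℂ), r ∈ genSet n m ∧
    (∀ b ∈ ds, ValidPair n b) ∧ p = ds.foldr (fun b q => pd n b q) r}

/-- the ideal `I(λ) = S(n⁻)·(U(n⁺) ∘ R)` -/
noncomputable def idealI (n : ℕ) (m : ℕ → ℕ) : Ideal (MvPolynomial (RootIdx n) ℂ) :=
  Ideal.span (opGenSet n m)

end Lie

end SpPBW

/-!
The order (2.8) is total, so `M_i^s` has at most one element `β`, and `m_i^s` is either `0` or
the indicator of the single root `β ∈ R_i`. A Dyck path is strictly increasing in the product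
order, so it meets `β` at most once; and a Dyck path through `β` starts in a row `≤ β.1 ≤ i` and
ends either in a column `≥ β.2 ≥ i` or at a root `α_{j,j̄}`, whose bound `m_h + ⋯ + m_n` involves
`m_i` since `i ≤ n`; so its bound for `ω_i` is `1`.
-/

lemma List.sum_map_boole_le_one {α : Type*} {S : Set α} [DecidablePred (· ∈ S)]
    (hS : S.Subsingleton) {l : List α} (hl : l.Nodup) :
    (l.map fun x => if x ∈ S then 1 else 0).sum ≤ 1 := by
  classical
  rw [← List.sum_toFinset _ hl, Finset.sum_boole, Nat.cast_id, Finset.card_le_one]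
  intro a ha b hb
  exact hS (Finset.mem_filter.mp ha).2 (Finset.mem_filter.mp hb).2

lemma List.Pairwise.head_le {α : Type*} [Preorder α] {l : List α} (hl : l.Pairwise (· < ·))
    {a x : α} (ha : l.head? = some a) (hx : x ∈ l) : a ≤ x := by
  obtain ⟨t, rfl⟩ := List.head?_eq_some_iff.mp ha
  rcases List.mem_cons.mp hx with rfl | hx
  · exact le_rfl
  · exact (List.pairwise_cons.mp hl).1 x hx |>.le

lemma List.Pairwise.le_getLast {α : Type*} [Preorder α] {l : List α} (hl : l.Pairwise (· < ·))
    {b x : α} (hb : l.getLast? = some b) (hx : x ∈ l) : x ≤ b := by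
  obtain ⟨t, rfl⟩ := List.getLast?_eq_some_iff.mp hb
  rcases List.mem_append.mp hx with hx | hx
  · exact (List.pairwise_append.mp hl).2.2 x hx b (List.mem_singleton_self b) |>.le
  · exact (List.mem_singleton.mp hx).le

namespace SpPBW

lemma eq_of_not_rootLt_of_not_rootLt {a b : ℕ × ℕ} (hab : ¬ rootLt a b) (hba : ¬ rootLt b a) :
    a = b := by
  unfold rootLt at hab hba
  ext <;> omega

lemma Mis_subsingleton (n i : ℕ) (s : ℕ × ℕ → ℕ) : (Mis n i s).Subsingleton :=
  fun _ ha _ hb => eq_of_not_rootLt_of_not_rootLt (hb.2 _ ha.1) (ha.2 _ hb.1)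

lemma DyckStep.lt {a b : ℕ × ℕ} (h : DyckStep a b) : a < b := by
  rcases h with rfl | rfl <;> simp [Prod.lt_iff]

lemma IsDyck.pairwise_lt {n : ℕ} {p : List (ℕ × ℕ)} (hp : IsDyck n p) : p.Pairwise (· < ·) :=
  List.isChain_iff_pairwise.mp (hp.2.2.2.1.imp fun _ _ => DyckStep.lt)

lemma sum_fundWt_Icc {i a b : ℕ} (hi : i ∈ Finset.Icc a b) :
    ∑ l ∈ Finset.Icc a b, fundWt i l = 1 := by
  simp only [fundWt, Finset.sum_ite_eq', if_pos hi]

lemma one_le_pathBound_fundWt {n i : ℕ} (hin : i ≤ n) {p : List (ℕ × ℕ)} (hp : IsDyck n p)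
    {a : ℕ × ℕ} (ha : a ∈ p) (hai : a.1 ≤ i) (hia : i ≤ a.2) :
    1 ≤ pathBound n (fundWt i) p := by
  obtain ⟨h, hhead⟩ := hp.2.2.1
  obtain ⟨b, hlast⟩ : ∃ b, p.getLast? = some b := by
    obtain ⟨j, hl | hl⟩ := hp.2.2.2.2 <;> exact ⟨_, hl⟩
  have hha : h ≤ a.1 := (hp.pairwise_lt.head_le hhead ha).1
  have hab : a.2 ≤ b.2 := (hp.pairwise_lt.le_getLast hlast ha).2
  simp only [pathBound, hhead, hlast]
  split_ifs
  · rw [sum_fundWt_Icc (Finset.mem_Icc.mpr ⟨by omega, by omega⟩)]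
  · rw [sum_fundWt_Icc (Finset.mem_Icc.mpr ⟨by omega, hin⟩)]

theorem stmt10_general (n i : ℕ) (hin : i ≤ n) (s : ℕ × ℕ → ℕ) :
    InS n (fundWt i) (mInd n i s) := by
  classical
  refine ⟨fun a ha => if_neg fun haM => ha haM.1.1, fun p hp => ?_⟩
  by_cases hM : ∃ a ∈ Mis n i s, a ∈ p
  · obtain ⟨a, ⟨⟨-, -, hai, hia⟩, -⟩, hap⟩ := hM
    calc (p.map (mInd n i s)).sum ≤ 1 :=
          List.sum_map_boole_le_one (Mis_subsingleton n i s) hp.pairwise_lt.nodup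
      _ ≤ pathBound n (fundWt i) p := one_le_pathBound_fundWt hin hp hap hai hia
  · have hzero : ∀ x ∈ p, mInd n i s x = 0 := fun x hxp => if_neg fun hxM => hM ⟨x, hxM, hxp⟩
    simp [List.map_congr_left hzero]

/-- Let `λ = Σ m_j ω_j` and let `i` be minimal with `m_i ≠ 0`.  For `s ∈ S(λ)`, the
indicator vector `m_i^s` of the set of minimal elements of
`R_i^s = {β : (ω_i,β) ≠ 0, s_β ≠ 0}` lies in `S(ω_i)`. -/
theorem stmt10 (n i : ℕ) (hn : 1 ≤ n) (hi : 1 ≤ i) (hin : i ≤ n) (m : ℕ → ℕ)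
    (hmi : m i ≠ 0) (hmin : ∀ j, j < i → m j = 0)
    (s : ℕ × ℕ → ℕ) (hs : InS n m s) :
    InS n (fundWt i) (mInd n i s) :=
  stmt10_general n i hin s

end SpPBW
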